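/- arXiv:2310.06953 — 6 statements merged into one kernel-verified Lean document; each statement's English description precedes it below -/
import Mathlib

section
/- Let ω be a modulus of continuity and f ∈ C^{m,ω}(I) for a compact interval I. There exists a constant C > 0 depending only on m and the C^{m,ω} seminorm of f such that for any set X ⊆ I of m+1 distinct points with Newton interpolation polynomial P = P(X;f), we have |f(x) − P(x)| ≤ C ω(diam X)(diam X)^m and |f'(x) − P'(x)| ≤ C ω(diam X)(diam X)^{m−1} for all x in [min X, max X]. -/
/-! The error `g = f - P` vanishes at the `m + 1` nodes, so by repeated Rolle every
`g⁽ᵏ⁾`, `k ≤ m`, has a zero in `[min X, max X]`. As `P⁽ᵐ⁾` is constant, `g⁽ᵐ⁾` is `f⁽ᵐ⁾`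
minus its value at such a zero, hence bounded by `M ω(diam X)`. Going back down, the mean
value theorem from a zero of `g⁽ᵏ⁾` costs one factor `diam X` per step, so
`|g⁽ᵏ⁾| ≤ C ω(diam X) (diam X)^(m-k)`; the cases `k = 0, 1` are the two estimates. -/

open Set Polynomial

section IteratedDerivPolynomial

variable {𝕜 : Type*} [NontriviallyNormedField 𝕜]

theorem Polynomial.contDiff_eval (p : 𝕜[X]) (n : WithTop ℕ∞) :
    ContDiff 𝕜 n (fun x => p.eval x) := by
  simpa [aeval_def] using p.contDiff_aeval (R := 𝕜) (𝕜 := 𝕜) n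

theorem Polynomial.iteratedDeriv_eval (p : 𝕜[X]) (k : ℕ) :
    iteratedDeriv k (fun x => p.eval x) = fun x => (derivative^[k] p).eval x := by
  induction k with
  | zero => simp
  | succ k ih =>
    ext x
    rw [iteratedDeriv_succ, ih, Polynomial.deriv, Function.iterate_succ_apply']

theorem iteratedDeriv_sub_polynomial_eval {n k : ℕ} {f : 𝕜 → 𝕜} (hf : ContDiff 𝕜 n f)
    (hk : k ≤ n) (p : 𝕜[X]) (x : 𝕜) :
    iteratedDeriv k (fun y => f y - p.eval y) x =
      iteratedDeriv k f x - (derivative^[k] p).eval x := by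
  rw [iteratedDeriv_fun_sub ((hf.of_le (by exact_mod_cast hk)).contDiffAt)
    ((p.contDiff_eval k).contDiffAt), p.iteratedDeriv_eval]

theorem iteratedDeriv_sub_polynomial_eval_sub {n : ℕ} {f : 𝕜 → 𝕜} (hf : ContDiff 𝕜 n f)
    {p : 𝕜[X]} (hp : p.natDegree ≤ n) (x y : 𝕜) :
    iteratedDeriv n (fun z => f z - p.eval z) x -
        iteratedDeriv n (fun z => f z - p.eval z) y =
      iteratedDeriv n f x - iteratedDeriv n f y := by
  have hconst : (derivative^[n] p).natDegree = 0 := by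
    have := p.natDegree_iterate_derivative n
    omega
  rw [iteratedDeriv_sub_polynomial_eval hf le_rfl, iteratedDeriv_sub_polynomial_eval hf le_rfl,
    eq_C_of_natDegree_eq_zero hconst, eval_C, eval_C]
  ring

end IteratedDerivPolynomial

theorem exists_finset_deriv_eq_zero {g : ℝ → ℝ} {s : Set ℝ} (hs : s.OrdConnected)
    (hg : ContinuousOn g s) {n : ℕ} {S : Finset ℝ} (hS : S.card = n + 1) (hSs : ↑S ⊆ s)
    (hgS : ∀ x ∈ S, g x = 0) :
    ∃ T : Finset ℝ, T.card = n ∧ ↑T ⊆ s ∧ ∀ x ∈ T, deriv g x = 0 := by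
  induction n generalizing s S with
  | zero => exact ⟨∅, rfl, by simp⟩
  | succ n ih =>
    have hSne : S.Nonempty := Finset.card_pos.mp (by omega)
    set a := S.min' hSne
    have ha : a ∈ S := S.min'_mem hSne
    have hS'card : (S.erase a).card = n + 1 := by rw [Finset.card_erase_of_mem ha, hS]; rfl
    have hS'ne : (S.erase a).Nonempty := Finset.card_pos.mp (by omega)
    set b := (S.erase a).min' hS'ne
    have hb' : b ∈ S.erase a := Finset.min'_mem _ hS'ne
    have hb : b ∈ S := Finset.mem_of_mem_erase hb'
    have hab : a < b := (S.min'_le b hb).lt_of_ne (Finset.ne_of_mem_erase hb').symm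
    have habs : Icc a b ⊆ s := hs.out (hSs ha) (hSs hb)
    obtain ⟨c, hc, hc0⟩ := exists_deriv_eq_zero hab (hg.mono habs) (by rw [hgS a ha, hgS b hb])
    -- the zeros of `deriv g` produced from `S.erase a` all lie to the right of `b > c`
    have hS's : ↑(S.erase a) ⊆ s ∩ Ici b := fun y hy =>
      ⟨hSs (Finset.mem_of_mem_erase hy), mem_Ici.mpr ((S.erase a).min'_le y hy)⟩
    obtain ⟨T, hT, hTs, hgT⟩ := ih (hs.inter ordConnected_Ici) (hg.mono inter_subset_left)
      hS'card hS's (fun y hy => hgS y (Finset.mem_of_mem_erase hy))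
    have hcT : c ∉ T := fun hcT => (hTs hcT).2.not_gt hc.2
    refine ⟨insert c T, by rw [Finset.card_insert_of_notMem hcT, hT], ?_, ?_⟩
    · rw [Finset.coe_insert]
      exact insert_subset (habs (Ioo_subset_Icc_self hc)) (hTs.trans inter_subset_left)
    · simpa [hc0] using hgT

theorem exists_finset_iteratedDeriv_eq_zero {g : ℝ → ℝ} {s : Set ℝ} (hs : s.OrdConnected)
    {n : ℕ} (hg : ContDiff ℝ n g) {S : Finset ℝ} (hS : S.card = n + 1) (hSs : ↑S ⊆ s)
    (hgS : ∀ x ∈ S, g x = 0) {k : ℕ} (hk : k ≤ n) :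
    ∃ T : Finset ℝ, T.card = n + 1 - k ∧ ↑T ⊆ s ∧ ∀ x ∈ T, iteratedDeriv k g x = 0 := by
  induction k with
  | zero => exact ⟨S, hS, hSs, by simpa using hgS⟩
  | succ k ih =>
    obtain ⟨T, hT, hTs, hgT⟩ := ih (by omega)
    have hcont := hg.continuous_iteratedDeriv k (by exact_mod_cast (by omega : k ≤ n))
    have hTcard : T.card = n - k + 1 := by omega
    obtain ⟨T', hT', hT's, hgT'⟩ :=
      exists_finset_deriv_eq_zero hs hcont.continuousOn hTcard hTs hgT
    exact ⟨T', by omega, hT's, by simpa only [iteratedDeriv_succ] using hgT'⟩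

theorem exists_iteratedDeriv_eq_zero {g : ℝ → ℝ} {s : Set ℝ} (hs : s.OrdConnected)
    {n : ℕ} (hg : ContDiff ℝ n g) {S : Finset ℝ} (hS : S.card = n + 1) (hSs : ↑S ⊆ s)
    (hgS : ∀ x ∈ S, g x = 0) {k : ℕ} (hk : k ≤ n) :
    ∃ ξ ∈ s, iteratedDeriv k g ξ = 0 := by
  obtain ⟨T, hT, hTs, hgT⟩ := exists_finset_iteratedDeriv_eq_zero hs hg hS hSs hgS hk
  obtain ⟨ξ, hξ⟩ : T.Nonempty := Finset.card_pos.mp (by omega)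
  exact ⟨ξ, hTs hξ, hgT ξ hξ⟩

theorem abs_le_mul_of_abs_deriv_le {h : ℝ → ℝ} {a b C ξ x : ℝ}
    (hh : ∀ y ∈ Icc a b, DifferentiableAt ℝ h y) (hC : ∀ y ∈ Icc a b, |deriv h y| ≤ C)
    (hξ : ξ ∈ Icc a b) (hξ0 : h ξ = 0) (hx : x ∈ Icc a b) :
    |h x| ≤ C * (b - a) := by
  have hmvt := (convex_Icc a b).norm_image_sub_le_of_norm_deriv_le hh hC hξ hx
  rw [hξ0, sub_zero, Real.norm_eq_abs, Real.norm_eq_abs] at hmvt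
  have hdist : |x - ξ| ≤ b - a := Real.dist_eq x ξ ▸ Real.dist_le_of_mem_Icc hx hξ
  have hC0 : 0 ≤ C := (abs_nonneg _).trans (hC ξ hξ)
  exact hmvt.trans (mul_le_mul_of_nonneg_left hdist hC0)

theorem abs_iteratedDeriv_le_mul_pow {g : ℝ → ℝ} {a b C : ℝ} {n : ℕ} (hg : ContDiff ℝ n g)
    (hzero : ∀ k < n, ∃ ξ ∈ Icc a b, iteratedDeriv k g ξ = 0)
    (hC : ∀ x ∈ Icc a b, |iteratedDeriv n g x| ≤ C) {j : ℕ} (hj : j ≤ n) {x : ℝ}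
    (hx : x ∈ Icc a b) :
    |iteratedDeriv (n - j) g x| ≤ C * (b - a) ^ j := by
  induction j generalizing x with
  | zero => simpa using hC x hx
  | succ j ih =>
    set k := n - (j + 1)
    obtain ⟨ξ, hξ, hξ0⟩ := hzero k (by omega)
    have hdiff := hg.differentiable_iteratedDeriv k (by exact_mod_cast (by omega : k < n))
    have hderiv : ∀ y ∈ Icc a b, |deriv (iteratedDeriv k g) y| ≤ C * (b - a) ^ j := by
      intro y hy
      rw [← iteratedDeriv_succ, show k + 1 = n - j by omega]
      exact ih (by omega) hy
    rw [pow_succ, ← mul_assoc]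
    exact abs_le_mul_of_abs_deriv_le (fun y _ => hdiff y) hderiv hξ hξ0 hx

theorem mul_le_max_add_one_mul_of_monotoneOn {ω : ℝ → ℝ} (hmono : MonotoneOn ω (Ici 0))
    (h0 : ω 0 = 0) (M : ℝ) {r d : ℝ} (hr : 0 ≤ r) (hrd : r ≤ d) :
    M * ω r ≤ (max M 0 + 1) * ω d := by
  have hωr : 0 ≤ ω r := h0 ▸ hmono self_mem_Ici hr hr
  calc M * ω r ≤ (max M 0 + 1) * ω r := by gcongr; linarith [le_max_left M 0]
    _ ≤ (max M 0 + 1) * ω d := by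
      gcongr
      exact hmono hr (hr.trans hrd) hrd

theorem interpolation_estimate_general (m : ℕ) (hm : 1 ≤ m) (ω : ℝ → ℝ)
    (hmono : MonotoneOn ω (Set.Ici 0))
    (h0 : ω 0 = 0)
    (A B : ℝ)
    (f : ℝ → ℝ) (M : ℝ) (hf : ContDiff ℝ (m : ℕ∞) f)
    (hM : ∀ x y : ℝ, |iteratedDeriv m f x - iteratedDeriv m f y| ≤ M * ω |x - y|) :
    ∃ C > 0, ∀ (x : ℕ → ℝ) (lo hi : ℝ),
      (∀ i ≤ m, x i ∈ Set.Icc A B) →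
      (∀ i ≤ m, ∀ j ≤ m, x i = x j → i = j) →
      (∀ i ≤ m, x i ∈ Set.Icc lo hi) →
      (∃ i ≤ m, x i = lo) → (∃ j ≤ m, x j = hi) →
      ∀ P : Polynomial ℝ, P.natDegree ≤ m → (∀ i ≤ m, P.eval (x i) = f (x i)) →
      ∀ t ∈ Set.Icc lo hi,
        |f t - P.eval t| ≤ C * ω (hi - lo) * (hi - lo) ^ m ∧
        |deriv f t - (Polynomial.derivative P).eval t| ≤
          C * ω (hi - lo) * (hi - lo) ^ (m - 1) := by
  refine ⟨max M 0 + 1, by positivity, ?_⟩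
  intro x lo hi _ hinj hx _ _ P hP hPx t ht
  set g : ℝ → ℝ := fun y => f y - P.eval y
  have hg : ContDiff ℝ m g := hf.sub (P.contDiff_eval m)
  have hnodes : ((Finset.range (m + 1)).image x).card = m + 1 := by
    rw [Finset.card_image_of_injOn fun i hi j hj => hinj i (Finset.mem_range_succ_iff.mp hi) j
      (Finset.mem_range_succ_iff.mp hj), Finset.card_range]
  have hzero : ∀ k ≤ m, ∃ ξ ∈ Icc lo hi, iteratedDeriv k g ξ = 0 := fun k hk =>
    exists_iteratedDeriv_eq_zero ordConnected_Icc hg hnodes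
      (by simpa [Set.subset_def, Nat.lt_succ_iff] using hx)
      (by simpa [g, Nat.lt_succ_iff, sub_eq_zero] using fun i hi => (hPx i hi).symm) hk
  have htop : ∀ y ∈ Icc lo hi, |iteratedDeriv m g y| ≤ (max M 0 + 1) * ω (hi - lo) := by
    obtain ⟨ξ, hξ, hgξ⟩ := hzero m le_rfl
    intro y hy
    calc |iteratedDeriv m g y| = |iteratedDeriv m f y - iteratedDeriv m f ξ| := by
          rw [← iteratedDeriv_sub_polynomial_eval_sub hf hP, hgξ, sub_zero]
      _ ≤ M * ω |y - ξ| := hM y ξ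
      _ ≤ _ := mul_le_max_add_one_mul_of_monotoneOn hmono h0 M (abs_nonneg _)
          (Real.dist_eq y ξ ▸ Real.dist_le_of_mem_Icc hy hξ)
  have hzero' : ∀ k < m, ∃ ξ ∈ Icc lo hi, iteratedDeriv k g ξ = 0 := fun k hk => hzero k hk.le
  constructor
  · simpa [g] using abs_iteratedDeriv_le_mul_pow hg hzero' htop le_rfl ht
  · have h1 := abs_iteratedDeriv_le_mul_pow hg hzero' htop (Nat.sub_le m 1) ht
    rwa [Nat.sub_sub_self hm, iteratedDeriv_sub_polynomial_eval hf hm, iteratedDeriv_one,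
      Function.iterate_one] at h1

/-- Interpolation estimate: for f ∈ C^{m,ω}(I), I = [A,B] compact, there is a constant
C > 0 (depending only on m and the C^{m,ω} seminorm of f) such that for any set
X = {x₀,…,x_m} ⊆ I of m+1 distinct points with min lo, max hi (so diam X = hi − lo),
and P the interpolation polynomial of f on X (degree ≤ m, P(x_i) = f(x_i)),
|f(t) − P(t)| ≤ C ω(diam X)(diam X)^m and |f'(t) − P'(t)| ≤ C ω(diam X)(diam X)^{m−1}
for all t ∈ [min X, max X]. -/
theorem interpolation_estimate (m : ℕ) (hm : 1 ≤ m) (ω : ℝ → ℝ)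
    (hcont : ContinuousOn ω (Set.Ici 0))
    (hmono : MonotoneOn ω (Set.Ici 0))
    (hconc : ConcaveOn ℝ (Set.Ici 0) ω)
    (h0 : ω 0 = 0)
    (A B : ℝ) (hAB : A ≤ B)
    (f : ℝ → ℝ) (M : ℝ) (hf : ContDiff ℝ (m : ℕ∞) f)
    (hM : ∀ x y : ℝ, |iteratedDeriv m f x - iteratedDeriv m f y| ≤ M * ω |x - y|) :
    ∃ C > 0, ∀ (x : ℕ → ℝ) (lo hi : ℝ),
      (∀ i ≤ m, x i ∈ Set.Icc A B) →
      (∀ i ≤ m, ∀ j ≤ m, x i = x j → i = j) →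
      (∀ i ≤ m, x i ∈ Set.Icc lo hi) →
      (∃ i ≤ m, x i = lo) → (∃ j ≤ m, x j = hi) →
      ∀ P : Polynomial ℝ, P.natDegree ≤ m → (∀ i ≤ m, P.eval (x i) = f (x i)) →
      ∀ t ∈ Set.Icc lo hi,
        |f t - P.eval t| ≤ C * ω (hi - lo) * (hi - lo) ^ m ∧
        |deriv f t - (Polynomial.derivative P).eval t| ≤
          C * ω (hi - lo) * (hi - lo) ^ (m - 1) :=
  interpolation_estimate_general m hm ω hmono h0 A B f M hf hM
end

section
/- Let f : [a,b] → ℝ be absolutely continuous and m ≥ 2. If f' is (m−1)-times L^{1,ω} differentiable at x ∈ (a,b) with polynomial P of degree at most m−1, then f is m-times L^{1,ω} differentiable at x with polynomial Q(y) := f(x) + ∫_x^y P(t) dt. Moreover the same constant C works: if ⨍_{B(x,ρ)}|f' − P| ≤ C ω(ρ) ρ^{m−1} for 0 < ρ < ρ₀, then ⨍_{B(x,ρ)}|f − Q| ≤ C ω(ρ) ρ^m for 0 < ρ < ρ₀. -/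
open MeasureTheory intervalIntegral Set

/-- If f : [a,b] → ℝ is absolutely continuous (with derivative f' satisfying the FTC),
m ≥ 2, and f' is (m−1)-times L^{1,ω} differentiable at x ∈ (a,b) with polynomial P of
degree ≤ m−1 and constants C, ρ₀, then f is m-times L^{1,ω} differentiable at x with
polynomial Q(y) = f(x) + ∫_x^y P, with the same constant C:
⨍_{B(x,ρ)} |f − Q| ≤ C ω(ρ) ρ^m for 0 < ρ < ρ₀. -/
theorem intL1 (a b : ℝ) (m : ℕ) (hm : 2 ≤ m) (ω : ℝ → ℝ)
    (hcont : ContinuousOn ω (Set.Ici 0))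
    (hmono : MonotoneOn ω (Set.Ici 0))
    (hconc : ConcaveOn ℝ (Set.Ici 0) ω)
    (h0 : ω 0 = 0)
    (f f' : ℝ → ℝ)
    (hint : IntervalIntegrable f' MeasureTheory.volume a b)
    (hAC : ∀ y ∈ Set.Icc a b, ∀ z ∈ Set.Icc a b, f z - f y = ∫ t in y..z, f' t)
    (x : ℝ) (hx : x ∈ Set.Ioo a b)
    (P : Polynomial ℝ) (hdeg : P.natDegree ≤ m - 1)
    (C ρ₀ : ℝ) (hC : 0 < C) (hρ₀ : 0 < ρ₀)
    (hball : Set.Ioo (x - ρ₀) (x + ρ₀) ⊆ Set.Ioo a b)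
    (hP : ∀ ρ : ℝ, 0 < ρ → ρ < ρ₀ →
      (2 * ρ)⁻¹ * ∫ t in (x - ρ)..(x + ρ), |f' t - P.eval t| ≤ C * ω ρ * ρ ^ (m - 1)) :
    ∀ ρ : ℝ, 0 < ρ → ρ < ρ₀ →
      (2 * ρ)⁻¹ * ∫ y in (x - ρ)..(x + ρ), |f y - (f x + ∫ t in x..y, P.eval t)|
        ≤ C * ω ρ * ρ ^ m := by
  intro ρ hρ hρρ₀
  have hc : a < x - ρ := (hball ⟨by linarith, by linarith⟩).1
  have hd : x + ρ < b := (hball ⟨by linarith, by linarith⟩).2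
  have hab : a ≤ b := le_of_lt (hx.1.trans hx.2)
  have hcd : x - ρ ≤ x + ρ := by linarith
  have hsub : Set.uIcc (x - ρ) (x + ρ) ⊆ Set.uIcc a b := by
    rw [Set.uIcc_of_le hcd, Set.uIcc_of_le hab]
    exact Set.Icc_subset_Icc hc.le hd.le
  have hIcc : Set.Icc (x - ρ) (x + ρ) ⊆ Set.Icc a b := by
    rw [← Set.uIcc_of_le hcd, ← Set.uIcc_of_le hab]; exact hsub
  have hxmem : x ∈ Set.Icc a b := ⟨hx.1.le, hx.2.le⟩
  have hxcd : x ∈ Set.uIcc (x - ρ) (x + ρ) := by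
    rw [Set.uIcc_of_le hcd]; constructor <;> linarith
  -- integrability of f' and the polynomial on subintervals
  have hf'cd : IntervalIntegrable f' volume (x - ρ) (x + ρ) := hint.mono_set hsub
  have hPint : ∀ u v : ℝ, IntervalIntegrable (fun t => P.eval t) volume u v :=
    fun u v => (P.continuous_aeval).intervalIntegrable u v
  have hf'sub : ∀ y ∈ Set.uIcc (x - ρ) (x + ρ), IntervalIntegrable f' volume x y := by
    intro y hy
    exact hint.mono_set ((Set.uIcc_subset_uIcc hxcd hy).trans hsub)
  -- g = |f' - P|
  set g : ℝ → ℝ := fun t => |f' t - P.eval t| with hg_def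
  have hgint : ∀ u ∈ Set.uIcc (x - ρ) (x + ρ), ∀ v ∈ Set.uIcc (x - ρ) (x + ρ),
      IntervalIntegrable g volume u v := by
    intro u hu v hv
    exact (((hint.mono_set hsub).sub (hPint _ _)).abs).mono_set
      (Set.uIcc_subset_uIcc hu hv)
  have hgnn : ∀ t, 0 ≤ g t := fun t => abs_nonneg _
  -- the key pointwise identity
  have key : ∀ y ∈ Set.uIcc (x - ρ) (x + ρ),
      f y - (f x + ∫ t in x..y, P.eval t) = ∫ t in x..y, (f' t - P.eval t) := by
    intro y hy
    have h1 : f y - f x = ∫ t in x..y, f' t :=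
      hAC x hxmem y (hIcc (by rwa [Set.uIcc_of_le hcd] at hy))
    rw [intervalIntegral.integral_sub (hf'sub y hy) (hPint x y)]
    linarith [h1]
  -- replace the integrand with the primitive F
  set F : ℝ → ℝ := fun y => ∫ t in x..y, (f' t - P.eval t) with hF_def
  have hFcont : ContinuousOn F (Set.uIcc (x - ρ) (x + ρ)) :=
    intervalIntegral.continuousOn_primitive_interval'
      ((hint.mono_set hsub).sub (hPint _ _)) hxcd
  have hrw : (∫ y in (x - ρ)..(x + ρ), |f y - (f x + ∫ t in x..y, P.eval t)|)
      = ∫ y in (x - ρ)..(x + ρ), |F y| := by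
    apply intervalIntegral.integral_congr
    intro y hy
    simp only [hF_def]
    rw [key y hy]
  -- pointwise bounds for |F|
  have hboundR : ∀ y ∈ Set.Icc x (x + ρ), |F y| ≤ ∫ t in x..(x + ρ), g t := by
    intro y hy
    have hy' : y ∈ Set.uIcc (x - ρ) (x + ρ) := by
      rw [Set.uIcc_of_le hcd]; exact ⟨by linarith [hy.1], hy.2⟩
    calc |F y| ≤ ∫ t in x..y, g t :=
          intervalIntegral.abs_integral_le_integral_abs hy.1
      _ ≤ ∫ t in x..(x + ρ), g t := by
          apply intervalIntegral.integral_mono_interval le_rfl hy.1 hy.2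
          · exact Filter.Eventually.of_forall hgnn
          · exact hgint x hxcd (x + ρ) (right_mem_uIcc)
  have hboundL : ∀ y ∈ Set.Icc (x - ρ) x, |F y| ≤ ∫ t in (x - ρ)..x, g t := by
    intro y hy
    have hy' : y ∈ Set.uIcc (x - ρ) (x + ρ) := by
      rw [Set.uIcc_of_le hcd]; exact ⟨hy.1, by linarith [hy.2]⟩
    have : F y = -∫ t in y..x, (f' t - P.eval t) := by
      simp only [hF_def]
      exact intervalIntegral.integral_symm y x
    calc |F y| = |∫ t in y..x, (f' t - P.eval t)| := by rw [this, abs_neg]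
      _ ≤ ∫ t in y..x, g t :=
          intervalIntegral.abs_integral_le_integral_abs hy.2
      _ ≤ ∫ t in (x - ρ)..x, g t := by
          apply intervalIntegral.integral_mono_interval hy.1 hy.2 le_rfl
          · exact Filter.Eventually.of_forall hgnn
          · exact hgint (x - ρ) left_mem_uIcc x hxcd
  -- integrability of |F| on pieces
  have hFabs : ∀ u ∈ Set.uIcc (x - ρ) (x + ρ), ∀ v ∈ Set.uIcc (x - ρ) (x + ρ),
      IntervalIntegrable (fun y => |F y|) volume u v := by
    intro u hu v hv
    exact ((hFcont.mono (Set.uIcc_subset_uIcc hu hv)).abs).intervalIntegrable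
  have hxleft : x - ρ ≤ x := by linarith
  have hxright : x ≤ x + ρ := by linarith
  -- bound the two halves
  have hR : (∫ y in x..(x + ρ), |F y|) ≤ ρ * ∫ t in x..(x + ρ), g t := by
    have := intervalIntegral.integral_mono_on hxright
      (hFabs x hxcd (x + ρ) right_mem_uIcc)
      (intervalIntegrable_const) hboundR
    calc (∫ y in x..(x + ρ), |F y|)
        ≤ ∫ _ in x..(x + ρ), (∫ t in x..(x + ρ), g t) := this
      _ = ρ * ∫ t in x..(x + ρ), g t := by
          rw [intervalIntegral.integral_const, smul_eq_mul]; ring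
  have hL : (∫ y in (x - ρ)..x, |F y|) ≤ ρ * ∫ t in (x - ρ)..x, g t := by
    have := intervalIntegral.integral_mono_on hxleft
      (hFabs (x - ρ) left_mem_uIcc x hxcd)
      (intervalIntegrable_const) hboundL
    calc (∫ y in (x - ρ)..x, |F y|)
        ≤ ∫ _ in (x - ρ)..x, (∫ t in (x - ρ)..x, g t) := this
      _ = ρ * ∫ t in (x - ρ)..x, g t := by
          rw [intervalIntegral.integral_const, smul_eq_mul]; ring
  -- assemble
  have hsplitF : (∫ y in (x - ρ)..(x + ρ), |F y|)
      = (∫ y in (x - ρ)..x, |F y|) + ∫ y in x..(x + ρ), |F y| :=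
    (intervalIntegral.integral_add_adjacent_intervals
      (hFabs (x - ρ) left_mem_uIcc x hxcd) (hFabs x hxcd (x + ρ) right_mem_uIcc)).symm
  have hsplitg : (∫ t in (x - ρ)..(x + ρ), g t)
      = (∫ t in (x - ρ)..x, g t) + ∫ t in x..(x + ρ), g t :=
    (intervalIntegral.integral_add_adjacent_intervals
      (hgint (x - ρ) left_mem_uIcc x hxcd) (hgint x hxcd (x + ρ) right_mem_uIcc)).symm
  have hmain : (∫ y in (x - ρ)..(x + ρ), |F y|) ≤ ρ * ∫ t in (x - ρ)..(x + ρ), g t := by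
    rw [hsplitF, hsplitg]; linarith
  have h2ρ : (0:ℝ) < (2 * ρ)⁻¹ := by positivity
  have hfin : (2 * ρ)⁻¹ * ∫ y in (x - ρ)..(x + ρ), |F y|
      ≤ ρ * ((2 * ρ)⁻¹ * ∫ t in (x - ρ)..(x + ρ), g t) := by
    rw [← mul_assoc, mul_comm ρ (2 * ρ)⁻¹, mul_assoc]
    exact mul_le_mul_of_nonneg_left hmain h2ρ.le
  rw [hrw]
  calc (2 * ρ)⁻¹ * ∫ y in (x - ρ)..(x + ρ), |F y|
      ≤ ρ * ((2 * ρ)⁻¹ * ∫ t in (x - ρ)..(x + ρ), g t) := hfin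
    _ ≤ ρ * (C * ω ρ * ρ ^ (m - 1)) :=
        mul_le_mul_of_nonneg_left (hP ρ hρ hρρ₀) hρ.le
    _ = C * ω ρ * (ρ ^ (m - 1) * ρ) := by ring
    _ = C * ω ρ * ρ ^ m := by
        rw [← pow_succ, show m - 1 + 1 = m by omega]
end

section
/- Suppose (f,g,h) : [a,b] → ℍ is a horizontal curve (so h' = 2(f'g − g'f) a.e.) and f', g' are (m−1)-times L^{1,ω} differentiable at x ∈ (a,b), m ≥ 2. Let P, Q be the m-th order L^{1,ω} derivatives at x of f, g respectively, let R := 2(P'Q − Q'P), and let R̃ be the polynomial of degree at most m−1 such that R − R̃ is divisible by (y−x)^m. Then h' is (m−1)-times L^{1,ω} differentiable at x with L^{1,ω} derivative R̃. -/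
/-!
Subtracting the approximations, a.e. near `x`
  `h' - R̃ = 2 ((f' - P') g + P' (g - Q)) - 2 ((g' - Q') f + Q' (f - P)) + (t - x)^m S`,
where `R - R̃ = (X - x)^m S`. Each product pairs a locally bounded factor with an error whose
mean over `B(x, ρ)` is `O(ω(ρ) ρ^(m-1))` (the errors of `f`, `g` are even `O(ω(ρ) ρ^m)`), and
the last term is `O(ρ^m)` pointwise, which suffices because `ρ = O(ω(ρ))` for a concave `ω`
with `ω(0) = 0`. The mean of `|·|` over a ball is subadditive and scales under bounded factors,
so these bounds add up.
-/

open MeasureTheory Polynomial Set Filter Topology Asymptotics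

/-- `⨍_{B(x,ρ)} |u|`. -/
noncomputable def meanAbs (u : ℝ → ℝ) (x ρ : ℝ) : ℝ :=
  (2 * ρ)⁻¹ * ∫ t in (x - ρ)..(x + ρ), |u t|

section MeanAbs

variable {u v w : ℝ → ℝ} {x ρ c M : ℝ}

lemma meanAbs_nonneg (hρ : 0 ≤ ρ) : 0 ≤ meanAbs u x ρ :=
  mul_nonneg (by positivity)
    (intervalIntegral.integral_nonneg (by linarith) fun _ _ => abs_nonneg _)

lemma meanAbs_neg : meanAbs (-u) x ρ = meanAbs u x ρ := by
  simp [meanAbs]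

lemma meanAbs_const_mul : meanAbs (fun t => c * u t) x ρ = |c| * meanAbs u x ρ := by
  simp only [meanAbs, abs_mul, intervalIntegral.integral_const_mul]
  ring

lemma meanAbs_add_le (hρ : 0 ≤ ρ) (hu : IntervalIntegrable u volume (x - ρ) (x + ρ))
    (hv : IntervalIntegrable v volume (x - ρ) (x + ρ)) :
    meanAbs (u + v) x ρ ≤ meanAbs u x ρ + meanAbs v x ρ := by
  rw [meanAbs, meanAbs, meanAbs, ← mul_add, ← intervalIntegral.integral_add hu.abs hv.abs]
  exact mul_le_mul_of_nonneg_left (intervalIntegral.integral_mono_on (by linarith)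
    (hu.add hv).abs (hu.abs.add hv.abs) fun t _ => abs_add_le _ _) (by positivity)

lemma meanAbs_mul_le (hρ : 0 ≤ ρ) (hu : IntervalIntegrable u volume (x - ρ) (x + ρ))
    (hw : ContinuousOn w (Icc (x - ρ) (x + ρ))) (hM : ∀ t ∈ Icc (x - ρ) (x + ρ), |w t| ≤ M) :
    meanAbs (w * u) x ρ ≤ M * meanAbs u x ρ := by
  have hle : x - ρ ≤ x + ρ := by linarith
  have hwu : IntervalIntegrable (w * u) volume (x - ρ) (x + ρ) :=
    hu.continuousOn_mul (by rwa [uIcc_of_le hle])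
  rw [meanAbs, meanAbs, mul_left_comm M, ← intervalIntegral.integral_const_mul M]
  refine mul_le_mul_of_nonneg_left (intervalIntegral.integral_mono_on hle hwu.abs
    (hu.abs.const_mul M) fun t ht => ?_) (by positivity)
  rw [Pi.mul_apply, abs_mul]
  exact mul_le_mul_of_nonneg_right (hM t ht) (abs_nonneg _)

lemma meanAbs_le_of_abs_le (hρ : 0 < ρ) (h : ∀ t ∈ Icc (x - ρ) (x + ρ), |u t| ≤ c) :
    meanAbs u x ρ ≤ c := by
  have hint : ∫ t in (x - ρ)..(x + ρ), |u t| ≤ c * (2 * ρ) := by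
    have := intervalIntegral.norm_integral_le_of_norm_le_const (a := x - ρ) (b := x + ρ)
      (f := fun t => |u t|) fun t ht => by
        rw [uIoc_of_le (by linarith)] at ht
        simpa using h t (Ioc_subset_Icc_self ht)
    rw [Real.norm_eq_abs, show x + ρ - (x - ρ) = 2 * ρ by ring,
      abs_of_pos (by positivity : (0 : ℝ) < 2 * ρ)] at this
    exact (le_abs_self _).trans this
  rw [meanAbs, inv_mul_le_iff₀ (by positivity)]
  linarith

lemma meanAbs_congr_ae (hρ : 0 ≤ ρ) (h : ∀ᵐ t, t ∈ Icc (x - ρ) (x + ρ) → u t = v t) :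
    meanAbs u x ρ = meanAbs v x ρ := by
  rw [meanAbs, meanAbs, intervalIntegral.integral_congr_ae]
  filter_upwards [h] with t ht ht'
  rw [uIoc_of_le (by linarith)] at ht'
  rw [ht (Ioc_subset_Icc_self ht')]

end MeanAbs

lemma eventually_nhdsGT_zero_Icc_subset (x : ℝ) {δ : ℝ} (hδ : 0 < δ) :
    ∀ᶠ ρ in 𝓝[>] 0, 0 < ρ ∧ Icc (x - ρ) (x + ρ) ⊆ Icc (x - δ) (x + δ) :=
  (nhdsGT_basis 0).eventually_iff.2 ⟨δ, hδ, fun _ hρ =>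
    ⟨hρ.1, Icc_subset_Icc (by linarith [hρ.2]) (by linarith [hρ.2])⟩⟩

lemma MeasureTheory.IntegrableOn.intervalIntegrable_of_Icc_subset {u : ℝ → ℝ} {x ρ δ : ℝ}
    (hρ : 0 ≤ ρ) (hu : IntegrableOn u (Icc (x - δ) (x + δ)))
    (hsub : Icc (x - ρ) (x + ρ) ⊆ Icc (x - δ) (x + δ)) :
    IntervalIntegrable u volume (x - ρ) (x + ρ) :=
  (intervalIntegrable_iff_integrableOn_Icc_of_le (by linarith)).2 (hu.mono_set hsub)

lemma Asymptotics.IsBigO.exists_pos_bound_nhdsGT_zero {F r : ℝ → ℝ}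
    (h : F =O[𝓝[>] 0] r) (hr : ∀ ρ, 0 < ρ → 0 ≤ r ρ) :
    ∃ C > 0, ∃ ρ₁ > 0, ∀ ρ, 0 < ρ → ρ < ρ₁ → F ρ ≤ C * r ρ := by
  obtain ⟨C, hC, hCr⟩ := h.exists_pos
  obtain ⟨ρ₁, hρ₁, hbound⟩ := (nhdsGT_basis 0).eventually_iff.1 hCr.bound
  refine ⟨C, hC, ρ₁, hρ₁, fun ρ h0 h1 => ?_⟩
  have := hbound ⟨h0, h1⟩
  rw [Real.norm_eq_abs, Real.norm_of_nonneg (hr ρ h0)] at this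
  exact (le_abs_self _).trans this

lemma ConcaveOn.isBigO_id_nhdsGT_zero {ω : ℝ → ℝ} (hω : ConcaveOn ℝ (Ici 0) ω) (h0 : ω 0 = 0)
    (h1 : 0 < ω 1) : (fun ρ => ρ) =O[𝓝[>] 0] ω := by
  refine IsBigO.of_bound (ω 1)⁻¹ <| (nhdsGT_basis 0).eventually_iff.2 ⟨1, one_pos, fun ρ hρ => ?_⟩
  have hchord : ρ * ω 1 ≤ ω ρ := by
    have := hω.2 self_mem_Ici (mem_Ici.2 zero_le_one) (by linarith [hρ.2] : 0 ≤ 1 - ρ)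
      hρ.1.le (by ring)
    simpa [h0] using this
  rw [Real.norm_of_nonneg hρ.1.le, Real.norm_eq_abs, ← div_eq_inv_mul, le_div_iff₀ h1]
  exact hchord.trans (le_abs_self _)

lemma ConcaveOn.pow_isBigO_mul_pow_sub_one {ω : ℝ → ℝ} (hω : ConcaveOn ℝ (Ici 0) ω)
    (h0 : ω 0 = 0) (h1 : 0 < ω 1) {m : ℕ} (hm : m ≠ 0) :
    (fun ρ => ρ ^ m) =O[𝓝[>] 0] fun ρ => ω ρ * ρ ^ (m - 1) := by
  simpa only [mul_pow_sub_one hm] using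
    (hω.isBigO_id_nhdsGT_zero h0 h1).mul (isBigO_refl (· ^ (m - 1)) _)

lemma isBigO_mul_pow_mul_pow_sub_one (g : ℝ → ℝ) {m : ℕ} (hm : m ≠ 0) :
    (fun ρ => g ρ * ρ ^ m) =O[𝓝[>] 0] fun ρ => g ρ * ρ ^ (m - 1) :=
  (isBigO_refl g _).mul
    ((isLittleO_pow_pow (by omega : m - 1 < m)).isBigO.mono nhdsWithin_le_nhds)

-- Integrability is built in since `meanAbs` of a non-integrable function is a junk `0`.
def IsMeanBigO (x δ : ℝ) (u r : ℝ → ℝ) : Prop :=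
  IntegrableOn u (Icc (x - δ) (x + δ)) ∧ meanAbs u x =O[𝓝[>] 0] r

namespace IsMeanBigO

variable {u v w U V r r' : ℝ → ℝ} {x δ : ℝ}

lemma of_bound {C ρ₀ : ℝ} (hρ₀ : 0 < ρ₀) (hu : IntegrableOn u (Icc (x - δ) (x + δ)))
    (h : ∀ ρ, 0 < ρ → ρ < ρ₀ → meanAbs u x ρ ≤ C * r ρ) : IsMeanBigO x δ u r :=
  ⟨hu, IsBigO.of_bound |C| <| (nhdsGT_basis 0).eventually_iff.2 ⟨ρ₀, hρ₀, fun ρ hρ => by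
    rw [Real.norm_of_nonneg (meanAbs_nonneg hρ.1.le), Real.norm_eq_abs, ← abs_mul]
    exact (h ρ hρ.1 hρ.2).trans (le_abs_self _)⟩⟩

lemma trans_isBigO (hu : IsMeanBigO x δ u r) (hr : r =O[𝓝[>] 0] r') : IsMeanBigO x δ u r' :=
  ⟨hu.1, hu.2.trans hr⟩

lemma congr_ae (hδ : 0 < δ) (hu : IsMeanBigO x δ u r)
    (h : ∀ᵐ t, t ∈ Icc (x - δ) (x + δ) → u t = v t) : IsMeanBigO x δ v r := by
  refine ⟨hu.1.congr_fun_ae ((ae_restrict_iff' measurableSet_Icc).2 h), hu.2.congr' ?_ .rfl⟩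
  filter_upwards [eventually_nhdsGT_zero_Icc_subset x hδ] with ρ ⟨hρ, hsub⟩
  exact meanAbs_congr_ae hρ.le (h.mono fun t ht ht' => ht (hsub ht'))

lemma add (hδ : 0 < δ) (hu : IsMeanBigO x δ u r) (hv : IsMeanBigO x δ v r) :
    IsMeanBigO x δ (u + v) r := by
  refine ⟨hu.1.add hv.1, IsBigO.trans (IsBigO.of_bound 1 ?_) (hu.2.add hv.2)⟩
  filter_upwards [eventually_nhdsGT_zero_Icc_subset x hδ] with ρ ⟨hρ, hsub⟩
  rw [one_mul, Real.norm_of_nonneg (meanAbs_nonneg hρ.le),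
    Real.norm_of_nonneg (add_nonneg (meanAbs_nonneg hρ.le) (meanAbs_nonneg hρ.le))]
  exact meanAbs_add_le hρ.le (hu.1.intervalIntegrable_of_Icc_subset hρ.le hsub)
    (hv.1.intervalIntegrable_of_Icc_subset hρ.le hsub)

lemma neg (hu : IsMeanBigO x δ u r) : IsMeanBigO x δ (-u) r :=
  ⟨hu.1.neg, hu.2.congr_left fun _ => meanAbs_neg.symm⟩

lemma sub (hδ : 0 < δ) (hu : IsMeanBigO x δ u r) (hv : IsMeanBigO x δ v r) :
    IsMeanBigO x δ (u - v) r :=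
  sub_eq_add_neg u v ▸ hu.add hδ hv.neg

lemma const_mul (c : ℝ) (hu : IsMeanBigO x δ u r) : IsMeanBigO x δ (fun t => c * u t) r :=
  ⟨hu.1.const_mul c, (hu.2.const_mul_left |c|).congr_left fun _ => meanAbs_const_mul.symm⟩

lemma mul (hδ : 0 < δ) (hw : ContinuousOn w (Icc (x - δ) (x + δ))) (hu : IsMeanBigO x δ u r) :
    IsMeanBigO x δ (w * u) r := by
  obtain ⟨M, hM⟩ := isCompact_Icc.exists_bound_of_continuousOn hw
  refine ⟨hu.1.continuousOn_mul hw isCompact_Icc, IsBigO.trans (IsBigO.of_bound M ?_) hu.2⟩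
  filter_upwards [eventually_nhdsGT_zero_Icc_subset x hδ] with ρ ⟨hρ, hsub⟩
  rw [Real.norm_of_nonneg (meanAbs_nonneg hρ.le), Real.norm_of_nonneg (meanAbs_nonneg hρ.le)]
  exact meanAbs_mul_le hρ.le (hu.1.intervalIntegrable_of_Icc_subset hρ.le hsub) (hw.mono hsub)
    fun t ht => hM t (hsub ht)

lemma mul_sub_mul (hδ : 0 < δ) (hv : ContinuousOn v (Icc (x - δ) (x + δ)))
    (hU : ContinuousOn U (Icc (x - δ) (x + δ))) (huU : IsMeanBigO x δ (u - U) r)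
    (hvV : IsMeanBigO x δ (v - V) r) : IsMeanBigO x δ (u * v - U * V) r := by
  rw [show u * v - U * V = v * (u - U) + U * (v - V) by ring]
  exact (huU.mul hδ hv).add hδ (hvV.mul hδ hU)

end IsMeanBigO

lemma isMeanBigO_pow_mul {S : ℝ → ℝ} {x δ : ℝ} (hδ : 0 < δ)
    (hS : ContinuousOn S (Icc (x - δ) (x + δ))) (k : ℕ) :
    IsMeanBigO x δ (fun t => (t - x) ^ k * S t) (· ^ k) := by
  obtain ⟨M, hM⟩ := isCompact_Icc.exists_bound_of_continuousOn hS
  refine ⟨((continuousOn_id.sub continuousOn_const).pow k).mul hS |>.integrableOn_compact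
    isCompact_Icc, IsBigO.of_bound M ?_⟩
  filter_upwards [eventually_nhdsGT_zero_Icc_subset x hδ] with ρ ⟨hρ, hsub⟩
  rw [Real.norm_of_nonneg (meanAbs_nonneg hρ.le), Real.norm_of_nonneg (by positivity), mul_comm]
  refine meanAbs_le_of_abs_le hρ fun t ht => ?_
  rw [abs_mul, abs_pow]
  exact mul_le_mul (pow_le_pow_left₀ (abs_nonneg _)
    (abs_sub_le_iff.2 ⟨by linarith [ht.2], by linarith [ht.1]⟩) k)
    (hM t (hsub ht)) (abs_nonneg _) (by positivity)

theorem vertL1_general (a b : ℝ) (m : ℕ) (hm : 2 ≤ m) (ω : ℝ → ℝ)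
    (hconc : ConcaveOn ℝ (Set.Ici 0) ω)
    (h0 : ω 0 = 0)
    (hpos : ∀ t : ℝ, 0 < t → 0 < ω t)
    (f g f' g' h' : ℝ → ℝ)
    (hfc : ContinuousOn f (Set.Icc a b)) (hgc : ContinuousOn g (Set.Icc a b))
    (hf'int : IntervalIntegrable f' volume a b)
    (hg'int : IntervalIntegrable g' volume a b)
    (hhor : ∀ᵐ t ∂volume, t ∈ Set.Ioo a b → h' t = 2 * (f' t * g t - g' t * f t))
    (x : ℝ) (hx : x ∈ Set.Ioo a b)
    (P Q : Polynomial ℝ)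
    (C ρ₀ : ℝ) (hρ₀ : 0 < ρ₀)
    (hPf : ∀ ρ : ℝ, 0 < ρ → ρ < ρ₀ →
      (2 * ρ)⁻¹ * ∫ t in (x - ρ)..(x + ρ), |f t - P.eval t| ≤ C * ω ρ * ρ ^ m)
    (hP'f : ∀ ρ : ℝ, 0 < ρ → ρ < ρ₀ →
      (2 * ρ)⁻¹ * ∫ t in (x - ρ)..(x + ρ), |f' t - (derivative P).eval t|
        ≤ C * ω ρ * ρ ^ (m - 1))
    (hQg : ∀ ρ : ℝ, 0 < ρ → ρ < ρ₀ →
      (2 * ρ)⁻¹ * ∫ t in (x - ρ)..(x + ρ), |g t - Q.eval t| ≤ C * ω ρ * ρ ^ m)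
    (hQ'g : ∀ ρ : ℝ, 0 < ρ → ρ < ρ₀ →
      (2 * ρ)⁻¹ * ∫ t in (x - ρ)..(x + ρ), |g' t - (derivative Q).eval t|
        ≤ C * ω ρ * ρ ^ (m - 1))
    (Rt : Polynomial ℝ)
    (hdiv : (Polynomial.X - Polynomial.C x) ^ m ∣
      (2 * (derivative P * Q - derivative Q * P) - Rt)) :
    ∃ C' > 0, ∃ ρ₁ > 0, ∀ ρ : ℝ, 0 < ρ → ρ < ρ₁ →
      (2 * ρ)⁻¹ * ∫ t in (x - ρ)..(x + ρ), |h' t - Rt.eval t|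
        ≤ C' * ω ρ * ρ ^ (m - 1) := by
  obtain ⟨δ, hδ, hJ⟩ : ∃ δ > 0, Icc (x - δ) (x + δ) ⊆ Ioo a b := by
    simpa only [Real.closedBall_eq_Icc] using
      Metric.nhds_basis_closedBall.mem_iff.1 (Ioo_mem_nhds hx.1 hx.2)
  have hJab : Icc (x - δ) (x + δ) ⊆ Icc a b := hJ.trans Ioo_subset_Icc_self
  have hpoly (p : ℝ[X]) : ContinuousOn (fun t => p.eval t) (Icc (x - δ) (x + δ)) :=
    p.continuous.continuousOn
  have hint {u : ℝ → ℝ} (hu : IntervalIntegrable u volume a b) :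
      IntegrableOn u (Icc (x - δ) (x + δ)) :=
    ((intervalIntegrable_iff_integrableOn_Icc_of_le (hx.1.trans hx.2).le).1 hu).mono_set hJab
  have of_hyp {u : ℝ → ℝ} {p : ℝ[X]} {k : ℕ} (hu : IntegrableOn u (Icc (x - δ) (x + δ)))
      (h : ∀ ρ : ℝ, 0 < ρ → ρ < ρ₀ →
        (2 * ρ)⁻¹ * ∫ t in (x - ρ)..(x + ρ), |u t - p.eval t| ≤ C * ω ρ * ρ ^ k) :
      IsMeanBigO x δ (u - fun t => p.eval t) fun ρ => ω ρ * ρ ^ k :=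
    .of_bound hρ₀ (hu.sub ((hpoly p).integrableOn_compact isCompact_Icc))
      fun ρ h0 h1 => (h ρ h0 h1).trans_eq (mul_assoc _ _ _)
  have hrate := isBigO_mul_pow_mul_pow_sub_one ω (by omega : m ≠ 0)
  have hf'g := (of_hyp (hint hf'int) hP'f).mul_sub_mul hδ (hgc.mono hJab) (hpoly _)
    ((of_hyp ((hgc.mono hJab).integrableOn_compact isCompact_Icc) hQg).trans_isBigO hrate)
  have hg'f := (of_hyp (hint hg'int) hQ'g).mul_sub_mul hδ (hfc.mono hJab) (hpoly _)
    ((of_hyp ((hfc.mono hJab).integrableOn_compact isCompact_Icc) hPf).trans_isBigO hrate)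
  obtain ⟨S, hS⟩ := hdiv
  have hrem := (isMeanBigO_pow_mul hδ (hpoly S) m).trans_isBigO
    (hconc.pow_isBigO_mul_pow_sub_one h0 (hpos 1 one_pos) (by omega))
  have hh' := (((hf'g.const_mul 2).sub hδ (hg'f.const_mul 2)).add hδ hrem).congr_ae hδ
    (v := fun t => h' t - Rt.eval t) <| hhor.mono fun t hhor_t htJ => by
      have hRt := congrArg (eval t) hS
      simp only [eval_sub, eval_mul, eval_pow, eval_X, eval_C, eval_ofNat] at hRt
      simp only [Pi.add_apply, Pi.sub_apply, Pi.mul_apply]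
      linear_combination -(hhor_t (hJ htJ)) - hRt
  obtain ⟨C', hC', ρ₁, hρ₁, hC'ρ⟩ := hh'.2.exists_pos_bound_nhdsGT_zero fun ρ hρ =>
    mul_nonneg (hpos ρ hρ).le (pow_nonneg hρ.le _)
  exact ⟨C', hC', ρ₁, hρ₁, fun ρ h0 h1 => (hC'ρ ρ h0 h1).trans_eq (mul_assoc _ _ _).symm⟩

/-- If (f,g,h) : [a,b] → ℍ is horizontal (h' = 2(f'g − g'f) a.e.) and P, Q are the
m-th order L^{1,ω} derivatives at x of f, g (degree ≤ m, approximating f, g and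
f', g' at the appropriate rates), R := 2(P'Q − Q'P), and Rt is the polynomial of degree
≤ m−1 with (y−x)^m ∣ (R − Rt), then h' is (m−1)-times L^{1,ω} differentiable at x with
L^{1,ω} derivative Rt. -/
theorem vertL1 (a b : ℝ) (m : ℕ) (hm : 2 ≤ m) (ω : ℝ → ℝ)
    (hcont : ContinuousOn ω (Set.Ici 0))
    (hmono : MonotoneOn ω (Set.Ici 0))
    (hconc : ConcaveOn ℝ (Set.Ici 0) ω)
    (h0 : ω 0 = 0)
    (hpos : ∀ t : ℝ, 0 < t → 0 < ω t)
    (f g f' g' h' : ℝ → ℝ)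
    (hfc : ContinuousOn f (Set.Icc a b)) (hgc : ContinuousOn g (Set.Icc a b))
    (hf'int : IntervalIntegrable f' volume a b)
    (hg'int : IntervalIntegrable g' volume a b)
    (hh'int : IntervalIntegrable h' volume a b)
    (hhor : ∀ᵐ t ∂volume, t ∈ Set.Ioo a b → h' t = 2 * (f' t * g t - g' t * f t))
    (x : ℝ) (hx : x ∈ Set.Ioo a b)
    (P Q : Polynomial ℝ) (hPdeg : P.natDegree ≤ m) (hQdeg : Q.natDegree ≤ m)
    (C ρ₀ : ℝ) (hC : 0 < C) (hρ₀ : 0 < ρ₀)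
    (hball : Set.Ioo (x - ρ₀) (x + ρ₀) ⊆ Set.Ioo a b)
    (hPf : ∀ ρ : ℝ, 0 < ρ → ρ < ρ₀ →
      (2 * ρ)⁻¹ * ∫ t in (x - ρ)..(x + ρ), |f t - P.eval t| ≤ C * ω ρ * ρ ^ m)
    (hP'f : ∀ ρ : ℝ, 0 < ρ → ρ < ρ₀ →
      (2 * ρ)⁻¹ * ∫ t in (x - ρ)..(x + ρ), |f' t - (derivative P).eval t|
        ≤ C * ω ρ * ρ ^ (m - 1))
    (hQg : ∀ ρ : ℝ, 0 < ρ → ρ < ρ₀ →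
      (2 * ρ)⁻¹ * ∫ t in (x - ρ)..(x + ρ), |g t - Q.eval t| ≤ C * ω ρ * ρ ^ m)
    (hQ'g : ∀ ρ : ℝ, 0 < ρ → ρ < ρ₀ →
      (2 * ρ)⁻¹ * ∫ t in (x - ρ)..(x + ρ), |g' t - (derivative Q).eval t|
        ≤ C * ω ρ * ρ ^ (m - 1))
    (Rt : Polynomial ℝ) (hRtdeg : Rt.natDegree ≤ m - 1)
    (hdiv : (Polynomial.X - Polynomial.C x) ^ m ∣
      (2 * (derivative P * Q - derivative Q * P) - Rt)) :
    ∃ C' > 0, ∃ ρ₁ > 0, ∀ ρ : ℝ, 0 < ρ → ρ < ρ₁ →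
      (2 * ρ)⁻¹ * ∫ t in (x - ρ)..(x + ρ), |h' t - Rt.eval t|
        ≤ C' * ω ρ * ρ ^ (m - 1) :=
  vertL1_general a b m hm ω hconc h0 hpos f g f' g' h' hfc hgc hf'int hg'int hhor x hx P Q C ρ₀ hρ₀
    hPf hP'f hQg hQ'g Rt hdiv
end

section
/- If a measurable function u : [a,b] → ℝ is m-times L^{1,ω} differentiable at almost every x ∈ (a,b), then for every ε > 0 there exists a compact set K ⊆ [a,b] with |[a,b] \ K| < ε together with uniform constants C > 0 and ρ₀ > 0 such that for every x ∈ K: B(x,ρ₀) ⊆ (a,b) and there exist real coefficients a_0(x),…,a_m(x) with ⨍_{B(x,ρ)} |u(y) − ∑_{i=0}^m a_i(x)(y−x)^i| dy ≤ C ω(ρ) ρ^m for all 0 < ρ < ρ₀. -/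
/-!
For `M, δ > 0` consider the points `x ∈ [a + δ, b - δ]` at which some polynomial with all
coefficients bounded by `M` satisfies the estimate with constant `M` for every `ρ < δ`. These sets
are compact: the mean deviation `(2ρ)⁻¹ ∫_{x-ρ}^{x+ρ} |u - P|` depends continuously on the centre
and the coefficients (dominated convergence), and bounded coefficient vectors form a compact set,
so the set is the projection of a compact set. Along `M = n + 1`, `δ = 1 / (n + 1)` they increase
and exhaust almost all of `(a, b)`, so by continuity of the measure one of them has complement of
measure `< ε`; it is the required `K`.
-/

open MeasureTheory Filter Set Topology Function
open scoped ENNReal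

section ParametricIntegral

variable {X : Type*} [TopologicalSpace X]

lemma eventually_mem_Ioc_iff {α β : X → ℝ} {p₀ : X} {y : ℝ} (hα : ContinuousAt α p₀)
    (hβ : ContinuousAt β p₀) (hyα : y ≠ α p₀) (hyβ : y ≠ β p₀) :
    ∀ᶠ p in 𝓝 p₀, (y ∈ Ioc (α p) (β p) ↔ y ∈ Ioc (α p₀) (β p₀)) := by
  have hleft : ∀ᶠ p in 𝓝 p₀, (α p < y ↔ α p₀ < y) := by
    rcases hyα.lt_or_gt with h | h
    · filter_upwards [continuousAt_const.eventually_lt hα h] with p hp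
      exact iff_of_false hp.not_gt h.not_gt
    · filter_upwards [hα.eventually_lt continuousAt_const h] with p hp
      exact iff_of_true hp h
  have hright : ∀ᶠ p in 𝓝 p₀, (y ≤ β p ↔ y ≤ β p₀) := by
    rcases hyβ.lt_or_gt with h | h
    · filter_upwards [continuousAt_const.eventually_lt hβ h] with p hp
      exact iff_of_true hp.le h.le
    · filter_upwards [hβ.eventually_lt continuousAt_const h] with p hp
      exact iff_of_false hp.not_ge h.not_ge
  filter_upwards [hleft, hright] with p hp₁ hp₂
  simp only [mem_Ioc, hp₁, hp₂]

lemma continuousAt_indicator_Ioc {α β : X → ℝ} {G : X → ℝ → ℝ} {p₀ : X} {y : ℝ}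
    (hα : ContinuousAt α p₀) (hβ : ContinuousAt β p₀) (hG : ContinuousAt (fun p => G p y) p₀)
    (hyα : y ≠ α p₀) (hyβ : y ≠ β p₀) :
    ContinuousAt (fun p => (Ioc (α p) (β p)).indicator (G p) y) p₀ := by
  have hmem := eventually_mem_Ioc_iff hα hβ hyα hyβ
  by_cases hy : y ∈ Ioc (α p₀) (β p₀)
  · refine hG.congr ?_
    filter_upwards [hmem] with p hp
    rw [indicator_of_mem (hp.2 hy)]
  · refine (continuousAt_const (y := (0 : ℝ))).congr ?_
    filter_upwards [hmem] with p hp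
    rw [indicator_of_notMem (mt hp.1 hy)]

lemma exists_eventually_forall_abs_le {Q : X → ℝ → ℝ} (hQ : Continuous (uncurry Q))
    {K : Set ℝ} (hK : IsCompact K) (p₀ : X) : ∃ B, ∀ᶠ p in 𝓝 p₀, ∀ y ∈ K, |Q p y| ≤ B := by
  have hQ₀ : Continuous (Q p₀) := hQ.comp (continuous_const.prodMk continuous_id)
  obtain ⟨B, hB⟩ := hK.exists_bound_of_continuousOn hQ₀.continuousOn
  refine ⟨B + 1, ?_⟩
  have hclose : ∀ y ∈ K, ∀ᶠ z : X × ℝ in 𝓝 (p₀, y), |Q z.1 z.2 - Q p₀ z.2| < 1 := by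
    intro y _
    have hcont : Continuous fun z : X × ℝ => |Q z.1 z.2 - Q p₀ z.2| :=
      (hQ.sub (hQ₀.comp continuous_snd)).abs
    exact hcont.continuousAt.eventually_lt continuousAt_const (by simp)
  filter_upwards [hK.eventually_forall_of_forall_eventually
    (P := fun p y => |Q p y - Q p₀ y| < 1) hclose] with p hp y hy
  have := abs_sub_abs_le_abs_sub (Q p y) (Q p₀ y)
  linarith [hp y hy, Real.norm_eq_abs (Q p₀ y) ▸ hB y hy]

theorem continuous_intervalIntegral_abs_sub [FirstCountableTopology X] {f : ℝ → ℝ}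
    (hf : LocallyIntegrable f) {ξ : X → ℝ} (hξ : Continuous ξ) {Q : X → ℝ → ℝ}
    (hQ : Continuous (uncurry Q)) {ρ : ℝ} (hρ : 0 ≤ ρ) : Continuous fun p => ∫ y in ξ p - ρ..ξ p + ρ, |f y - Q p y| := by
  have hindicator : ∀ p, ∫ y in ξ p - ρ..ξ p + ρ, |f y - Q p y|
      = ∫ y, (Ioc (ξ p - ρ) (ξ p + ρ)).indicator (fun y => |f y - Q p y|) y := fun p => by
    rw [intervalIntegral.integral_of_le (by linarith), integral_indicator measurableSet_Ioc]
  simp_rw [hindicator]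
  refine continuous_iff_continuousAt.2 fun p₀ => ?_
  set K := Icc (ξ p₀ - ρ - 1) (ξ p₀ + ρ + 1)
  obtain ⟨B, hB⟩ := exists_eventually_forall_abs_le hQ isCompact_Icc p₀ (K := K)
  have hnear : ∀ᶠ p in 𝓝 p₀, |ξ p - ξ p₀| < 1 :=
    (hξ.sub continuous_const).abs.continuousAt.eventually_lt continuousAt_const (by simp)
  -- the integrand is continuous in `p` except at the two endpoints `y = ξ p₀ ± ρ`
  refine continuousAt_of_dominated (bound := K.indicator fun y => |f y| + B) ?_ ?_ ?_ ?_
  · refine Eventually.of_forall fun p => AEStronglyMeasurable.indicator ?_ measurableSet_Ioc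
    have hQp : Continuous (Q p) := hQ.comp (continuous_const.prodMk continuous_id)
    exact (hf.aestronglyMeasurable.sub hQp.aestronglyMeasurable).norm
  · filter_upwards [hB, hnear] with p hpB hpξ
    refine Eventually.of_forall fun y => ?_
    by_cases hy : y ∈ Ioc (ξ p - ρ) (ξ p + ρ)
    · have hyK : y ∈ K := by
        rw [abs_lt] at hpξ
        exact ⟨by linarith [hy.1], by linarith [hy.2]⟩
      rw [indicator_of_mem hy, indicator_of_mem hyK, Real.norm_eq_abs, abs_abs]
      linarith [abs_sub (f y) (Q p y), hpB y hyK]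
    · rw [indicator_of_notMem hy, norm_zero]
      exact indicator_nonneg
        (fun z hz => by linarith [abs_nonneg (f z), abs_nonneg (Q p z), hpB z hz]) y
  · refine (integrable_indicator_iff measurableSet_Icc).2 ?_
    exact (hf.integrableOn_isCompact isCompact_Icc).abs.add (integrableOn_const (by simp))
  · have hends : ({ξ p₀ - ρ, ξ p₀ + ρ} : Set ℝ).Countable := (countable_singleton _).insert _
    filter_upwards [hends.ae_notMem volume] with y hy
    simp only [mem_insert_iff, mem_singleton_iff, not_or] at hy
    exact continuousAt_indicator_Ioc (hξ.sub continuous_const).continuousAt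
      (hξ.add continuous_const).continuousAt
      ((continuous_const.sub (hQ.comp (continuous_id.prodMk continuous_const))).abs.continuousAt)
      hy.1 hy.2

end ParametricIntegral

theorem exists_measure_diff_lt_of_ae_mem_iUnion {α : Type*} [MeasurableSpace α] {μ : Measure α}
    {s : Set α} {E : ℕ → Set α} (hs : NullMeasurableSet s μ) (hμs : μ s ≠ ∞) (hE : Monotone E)
    (hEm : ∀ n, NullMeasurableSet (E n) μ) (hcov : ∀ᵐ x ∂μ, x ∈ s → x ∈ ⋃ n, E n)
    {ε : ℝ≥0∞} (hε : 0 < ε) : ∃ n, μ (s \ E n) < ε := by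
  have hnull : μ (s \ ⋃ n, E n) = 0 :=
    measure_eq_zero_iff_ae_notMem.2 (hcov.mono fun x hx h => h.2 (hx h.1))
  have hlim := tendsto_measure_iInter_atTop (fun n => hs.diff (hEm n))
    (fun _ _ hij => sdiff_subset_sdiff_right (hE hij))
    ⟨0, measure_ne_top_of_subset sdiff_subset hμs⟩
  rw [← sdiff_iUnion, hnull] at hlim
  exact (hlim.eventually_lt_const hε).exists

noncomputable def polyDeviation (u : ℝ → ℝ) (m : ℕ) (x : ℝ) (c : ℕ → ℝ) (ρ : ℝ) : ℝ :=
  (2 * ρ)⁻¹ * ∫ y in (x - ρ)..(x + ρ), |u y - ∑ i ∈ Finset.range (m + 1), c i * (y - x) ^ i|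

section PolyDeviation

variable {u v : ℝ → ℝ} {m : ℕ} {x ρ : ℝ} {c : ℕ → ℝ}

lemma continuous_polyDeviation (hu : LocallyIntegrable u) (hρ : 0 ≤ ρ) :
    Continuous fun p : ℝ × (ℕ → ℝ) => polyDeviation u m p.1 p.2 ρ :=
  (continuous_intervalIntegral_abs_sub hu continuous_fst (by fun_prop) hρ).const_mul _

lemma polyDeviation_congr (h : EqOn u v (Icc (x - ρ) (x + ρ))) (hρ : 0 ≤ ρ) :
    polyDeviation u m x c ρ = polyDeviation v m x c ρ := by
  unfold polyDeviation
  congr 1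
  refine intervalIntegral.integral_congr fun y hy => ?_
  rw [uIcc_of_le (by linarith)] at hy
  simp only [h hy]

lemma polyDeviation_congr_coeff {c' : ℕ → ℝ} (h : ∀ i ≤ m, c i = c' i) :
    polyDeviation u m x c ρ = polyDeviation u m x c' ρ := by
  unfold polyDeviation
  have hsum : ∀ y, ∑ i ∈ Finset.range (m + 1), c i * (y - x) ^ i
      = ∑ i ∈ Finset.range (m + 1), c' i * (y - x) ^ i := fun y =>
    Finset.sum_congr rfl fun i hi => by rw [h i (Nat.lt_succ_iff.1 (Finset.mem_range.1 hi))]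
  simp only [hsum]

end PolyDeviation

def uniformApproxSet (a b : ℝ) (m : ℕ) (ω u : ℝ → ℝ) (M δ : ℝ) : Set ℝ :=
  {x | x ∈ Icc (a + δ) (b - δ) ∧ ∃ c : ℕ → ℝ, (∀ i, |c i| ≤ M) ∧
    ∀ ρ, 0 < ρ → ρ < δ → polyDeviation u m x c ρ ≤ M * ω ρ * ρ ^ m}

section UniformApproxSet

variable {a b : ℝ} {m : ℕ} {ω u : ℝ → ℝ} {M δ : ℝ}

lemma uniformApproxSet_subset_Icc (hδ : 0 ≤ δ) : uniformApproxSet a b m ω u M δ ⊆ Icc a b :=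
  fun _ hx => Icc_subset_Icc (by linarith) (by linarith) hx.1

lemma Ioo_subset_Ioo_of_mem_uniformApproxSet {x : ℝ} (hx : x ∈ uniformApproxSet a b m ω u M δ) :
    Ioo (x - δ) (x + δ) ⊆ Ioo a b :=
  fun _ hy => ⟨by linarith [hx.1.1, hy.1], by linarith [hx.1.2, hy.2]⟩

lemma exists_mem_uniformApproxSet (hω : ∀ ρ, 0 < ρ → 0 ≤ ω ρ) {x C ρ₀ : ℝ} {c : ℕ → ℝ}
    (hρ₀ : 0 < ρ₀) (hsub : Ioo (x - ρ₀) (x + ρ₀) ⊆ Ioo a b)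
    (hc : ∀ ρ, 0 < ρ → ρ < ρ₀ → polyDeviation u m x c ρ ≤ C * ω ρ * ρ ^ m) :
    ∃ M, ∃ δ > 0, x ∈ uniformApproxSet a b m ω u M δ := by
  set M := max C (∑ i ∈ Finset.range (m + 1), |c i|)
  -- truncating `c` above degree `m` makes the whole coefficient vector bounded
  set c' : ℕ → ℝ := fun i => if i ≤ m then c i else 0
  have hc'M : ∀ i, |c' i| ≤ M := by
    have hsum : ∑ i ∈ Finset.range (m + 1), |c i| ≤ M := le_max_right _ _
    intro i
    by_cases hi : i ≤ m
    · simp only [c', if_pos hi]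
      exact (Finset.single_le_sum (fun j _ => abs_nonneg (c j))
        (Finset.mem_range.2 (Nat.lt_succ_of_le hi))).trans hsum
    · simp only [c', if_neg hi, abs_zero]
      exact (Finset.sum_nonneg fun j _ => abs_nonneg (c j)).trans hsum
  have hleft : a < x - ρ₀ / 2 := (hsub ⟨by linarith, by linarith⟩).1
  have hright : x + ρ₀ / 2 < b := (hsub ⟨by linarith, by linarith⟩).2
  refine ⟨M, ρ₀ / 2, by positivity, ⟨by linarith, by linarith⟩, c', hc'M, fun ρ hρ hρδ => ?_⟩
  rw [polyDeviation_congr_coeff (c' := c) fun i hi => if_pos hi]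
  calc polyDeviation u m x c ρ ≤ C * ω ρ * ρ ^ m := hc ρ hρ (by linarith)
    _ ≤ M * ω ρ * ρ ^ m := by gcongr; exacts [hω ρ hρ, le_max_left _ _]

lemma uniformApproxSet_mono (hω : ∀ ρ, 0 < ρ → 0 ≤ ω ρ) {M' δ' : ℝ} (hM : M ≤ M')
    (hδ : δ' ≤ δ) : uniformApproxSet a b m ω u M δ ⊆ uniformApproxSet a b m ω u M' δ' := by
  rintro x ⟨hx, c, hcM, hc⟩
  refine ⟨Icc_subset_Icc (by linarith) (by linarith) hx, c, fun i => (hcM i).trans hM,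
    fun ρ hρ hρδ => (hc ρ hρ (hρδ.trans_le hδ)).trans ?_⟩
  have := hω ρ hρ
  gcongr

lemma monotone_uniformApproxSet_nat (hω : ∀ ρ, 0 < ρ → 0 ≤ ω ρ) :
    Monotone fun n : ℕ => uniformApproxSet a b m ω u (n + 1) (n + 1)⁻¹ := fun _ _ hle =>
  uniformApproxSet_mono hω (by gcongr) (by gcongr)

lemma exists_nat_mem_uniformApproxSet (hω : ∀ ρ, 0 < ρ → 0 ≤ ω ρ) (hδ : 0 < δ) {x : ℝ}
    (hx : x ∈ uniformApproxSet a b m ω u M δ) :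
    ∃ n : ℕ, x ∈ uniformApproxSet a b m ω u (n + 1) (n + 1)⁻¹ := by
  obtain ⟨n, hn⟩ := exists_nat_ge (max M δ⁻¹)
  refine ⟨n, uniformApproxSet_mono hω ?_ (inv_le_of_inv_le₀ hδ ?_) hx⟩ <;>
    linarith [le_max_left M δ⁻¹, le_max_right M δ⁻¹]

theorem isCompact_uniformApproxSet (hu : IntegrableOn u (Icc a b)) :
    IsCompact (uniformApproxSet a b m ω u M δ) := by
  -- the extension by zero has the same deviations on all balls `B(x, ρ)` that matter here
  set f := (Icc a b).indicator u
  have hf : LocallyIntegrable f :=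
    ((integrable_indicator_iff measurableSet_Icc).2 hu).locallyIntegrable
  have hfu : ∀ x ∈ Icc (a + δ) (b - δ), ∀ c ρ, 0 < ρ → ρ < δ →
      polyDeviation f m x c ρ = polyDeviation u m x c ρ := fun x hx c ρ hρ hρδ =>
    polyDeviation_congr ((eqOn_indicator).mono
      (Icc_subset_Icc (by linarith [hx.1]) (by linarith [hx.2]))) hρ.le
  set T := (Icc (a + δ) (b - δ) ×ˢ Icc (fun _ => -M) (fun _ => M)) ∩
    ⋂ ρ ∈ Ioo 0 δ, {p : ℝ × (ℕ → ℝ) | polyDeviation f m p.1 p.2 ρ ≤ M * ω ρ * ρ ^ m}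
  have hT : IsCompact T := (isCompact_Icc.prod isCompact_Icc).inter_right
    (isClosed_biInter fun ρ hρ =>
      isClosed_le (continuous_polyDeviation hf hρ.1.le) continuous_const)
  convert hT.image continuous_fst using 1
  ext x
  simp only [uniformApproxSet, T, mem_image, mem_inter_iff, mem_prod, mem_iInter₂, mem_ofPred_eq,
    mem_Ioo, Prod.exists, exists_and_right, exists_eq_right, mem_Icc, Pi.le_def, abs_le]
  constructor
  · rintro ⟨hx, c, hcM, hc⟩
    exact ⟨c, ⟨hx, fun i => (hcM i).1, fun i => (hcM i).2⟩,
      fun ρ hρ => (hfu x hx c ρ hρ.1 hρ.2).trans_le (hc ρ hρ.1 hρ.2)⟩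
  · rintro ⟨c, ⟨hx, hcl, hcu⟩, hc⟩
    exact ⟨hx, c, fun i => ⟨hcl i, hcu i⟩,
      fun ρ hρ hρδ => (hfu x hx c ρ hρ hρδ).symm.trans_le (hc ρ ⟨hρ, hρδ⟩)⟩
end UniformApproxSet

theorem uniform_parameters_general (a b : ℝ) (m : ℕ) (ω : ℝ → ℝ)
    (hmono : MonotoneOn ω (Set.Ici 0))
    (h0 : ω 0 = 0)
    (u : ℝ → ℝ) (hu : IntegrableOn u (Set.Icc a b))
    (hdiff : ∀ᵐ x ∂volume, x ∈ Set.Ioo a b →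
      ∃ (c : ℕ → ℝ) (Cx ρx : ℝ), 0 < Cx ∧ 0 < ρx ∧
        Set.Ioo (x - ρx) (x + ρx) ⊆ Set.Ioo a b ∧
        ∀ ρ : ℝ, 0 < ρ → ρ < ρx →
          (2 * ρ)⁻¹ * ∫ y in (x - ρ)..(x + ρ),
              |u y - ∑ i ∈ Finset.range (m + 1), c i * (y - x) ^ i|
            ≤ Cx * ω ρ * ρ ^ m) :
    ∀ ε > 0, ∃ K : Set ℝ, IsCompact K ∧ K ⊆ Set.Icc a b ∧
      volume (Set.Icc a b \ K) < ENNReal.ofReal ε ∧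
      ∃ C > 0, ∃ ρ₀ > 0, ∀ x ∈ K,
        Set.Ioo (x - ρ₀) (x + ρ₀) ⊆ Set.Ioo a b ∧
        ∃ c : ℕ → ℝ, ∀ ρ : ℝ, 0 < ρ → ρ < ρ₀ →
          (2 * ρ)⁻¹ * ∫ y in (x - ρ)..(x + ρ),
              |u y - ∑ i ∈ Finset.range (m + 1), c i * (y - x) ^ i|
            ≤ C * ω ρ * ρ ^ m := by
  intro ε hε
  have hω : ∀ ρ, 0 < ρ → 0 ≤ ω ρ := fun ρ hρ => h0 ▸ hmono self_mem_Ici hρ.le hρ.le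
  set E := fun n : ℕ => uniformApproxSet a b m ω u (n + 1) (n + 1)⁻¹
  have hcov : ∀ᵐ x ∂volume, x ∈ Icc a b → x ∈ ⋃ n, E n := by
    filter_upwards [hdiff, Ioo_ae_eq_Icc (μ := volume) (a := a) (b := b)] with x hx hIoo hxIcc
    obtain ⟨c, Cx, ρx, -, hρx, hsub, hc⟩ := hx (hIoo.mpr hxIcc)
    obtain ⟨M, δ, hδ, hxM⟩ := exists_mem_uniformApproxSet hω hρx hsub hc
    exact mem_iUnion.2 (exists_nat_mem_uniformApproxSet hω hδ hxM)
  obtain ⟨n, hn⟩ := exists_measure_diff_lt_of_ae_mem_iUnion measurableSet_Icc.nullMeasurableSet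
    measure_Icc_lt_top.ne (monotone_uniformApproxSet_nat hω)
    (fun n => (isCompact_uniformApproxSet hu).isClosed.measurableSet.nullMeasurableSet) hcov
    (ENNReal.ofReal_pos.2 hε)
  refine ⟨E n, isCompact_uniformApproxSet hu, uniformApproxSet_subset_Icc (by positivity), hn,
    n + 1, by positivity, (n + 1)⁻¹, by positivity,
    fun x hx => ⟨Ioo_subset_Ioo_of_mem_uniformApproxSet hx, ?_⟩⟩
  obtain ⟨-, c, -, hc⟩ := hx
  exact ⟨c, hc⟩

/-- If u ∈ L¹([a,b]) is m-times L^{1,ω} differentiable at almost every x ∈ (a,b), then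
for every ε > 0 there is a compact K ⊆ [a,b] with |[a,b] \ K| < ε on which u is
m-times L^{1,ω} differentiable with uniform parameters C, ρ₀. -/
theorem uniform_parameters (a b : ℝ) (hab : a < b) (m : ℕ) (ω : ℝ → ℝ)
    (hcont : ContinuousOn ω (Set.Ici 0))
    (hmono : MonotoneOn ω (Set.Ici 0))
    (hconc : ConcaveOn ℝ (Set.Ici 0) ω)
    (h0 : ω 0 = 0)
    (u : ℝ → ℝ) (hu : IntegrableOn u (Set.Icc a b))
    (hdiff : ∀ᵐ x ∂volume, x ∈ Set.Ioo a b →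
      ∃ (c : ℕ → ℝ) (Cx ρx : ℝ), 0 < Cx ∧ 0 < ρx ∧
        Set.Ioo (x - ρx) (x + ρx) ⊆ Set.Ioo a b ∧
        ∀ ρ : ℝ, 0 < ρ → ρ < ρx →
          (2 * ρ)⁻¹ * ∫ y in (x - ρ)..(x + ρ),
              |u y - ∑ i ∈ Finset.range (m + 1), c i * (y - x) ^ i|
            ≤ Cx * ω ρ * ρ ^ m) :
    ∀ ε > 0, ∃ K : Set ℝ, IsCompact K ∧ K ⊆ Set.Icc a b ∧
      volume (Set.Icc a b \ K) < ENNReal.ofReal ε ∧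
      ∃ C > 0, ∃ ρ₀ > 0, ∀ x ∈ K,
        Set.Ioo (x - ρ₀) (x + ρ₀) ⊆ Set.Ioo a b ∧
        ∃ c : ℕ → ℝ, ∀ ρ : ℝ, 0 < ρ → ρ < ρ₀ →
          (2 * ρ)⁻¹ * ∫ y in (x - ρ)..(x + ρ),
              |u y - ∑ i ∈ Finset.range (m + 1), c i * (y - x) ^ i|
            ≤ C * ω ρ * ρ ^ m :=
  uniform_parameters_general a b m ω hmono h0 u hu hdiff
end

section
/- Suppose a measurable function u : [a,b] → ℝ is m-times L¹ differentiable at a point x ∈ (a,b) with polynomial P^m_{u,x}. Then u is m-times approximately differentiable at x with the same polynomial: the approximate limit of |u(y) − P^m_{u,x}(y)|/|y−x|^m as y → x is 0. -/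
open MeasureTheory

/-- If u is m-times L¹ differentiable at x ∈ (a,b) with polynomial P, then u is m-times
approximately differentiable at x with the same polynomial: for every ε > 0, the set
{y : |u(y) − P(y)| > ε|y−x|^m} has density 0 at x. -/
theorem L1_implies_approx_differentiable (a b : ℝ) (u : ℝ → ℝ)
    (hu : IntegrableOn u (Set.Icc a b))
    (x : ℝ) (hx : x ∈ Set.Ioo a b) (m : ℕ)
    (P : Polynomial ℝ) (hdeg : P.natDegree ≤ m)
    (hL1 : ∀ ε > 0, ∃ δ > 0, ∀ ρ : ℝ, 0 < ρ → ρ < δ →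
      (2 * ρ)⁻¹ * ∫ y in (x - ρ)..(x + ρ), |u y - P.eval y| ≤ ε * ρ ^ m) :
    ∀ ε > 0, Filter.Tendsto
      (fun ρ : ℝ => volume {y ∈ Set.Ioo (x - ρ) (x + ρ) |
          ε * |y - x| ^ m < |u y - P.eval y|} / ENNReal.ofReal (2 * ρ))
      (nhdsWithin 0 (Set.Ioi 0)) (nhds 0) := by
  intro ε hε
  rw [ENNReal.tendsto_nhds_zero]
  intro η hη
  set r : ENNReal := min η 1 with hr
  have hr0 : 0 < r := lt_min hη zero_lt_one
  have hrt : r ≠ ⊤ := ne_top_of_le_ne_top ENNReal.one_ne_top (min_le_right _ _)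
  have hrtp : 0 < r.toReal := ENNReal.toReal_pos hr0.ne' hrt
  set θ : ℝ := r.toReal / 4 with hθdef
  have hθ0 : 0 < θ := by positivity
  have hθη : ENNReal.ofReal (2 * θ) ≤ η := by
    calc ENNReal.ofReal (2 * θ) ≤ ENNReal.ofReal r.toReal := by
          apply ENNReal.ofReal_le_ofReal; rw [hθdef]; linarith
      _ = r := ENNReal.ofReal_toReal hrt
      _ ≤ η := min_le_left _ _
  obtain ⟨δ, hδ0, hδ⟩ := hL1 (ε * θ ^ (m + 1)) (by positivity)
  have hxa : 0 < x - a := sub_pos.2 hx.1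
  have hbx : 0 < b - x := sub_pos.2 hx.2
  set δ' := min δ (min (x - a) (b - x)) with hδ'def
  have hδ'0 : 0 < δ' := lt_min hδ0 (lt_min hxa hbx)
  filter_upwards [Ioo_mem_nhdsGT_of_mem (Set.left_mem_Ico.2 hδ'0)] with ρ hρ
  obtain ⟨hρ0, hρδ'⟩ := hρ
  have hρδ : ρ < δ := lt_of_lt_of_le hρδ' (min_le_left _ _)
  have hρa : a ≤ x - ρ := by
    have := lt_of_lt_of_le hρδ' (le_trans (min_le_right _ _) (min_le_left _ _)); linarith
  have hρb : x + ρ ≤ b := by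
    have := lt_of_lt_of_le hρδ' (le_trans (min_le_right _ _) (min_le_right _ _)); linarith
  have hle : x - ρ ≤ x + ρ := by linarith
  -- integrability on the interval
  have hsub : Set.Ioc (x - ρ) (x + ρ) ⊆ Set.Icc a b := fun y hy =>
    ⟨le_trans hρa hy.1.le, le_trans hy.2 hρb⟩
  have hintu : IntegrableOn u (Set.Ioc (x - ρ) (x + ρ)) := hu.mono_set hsub
  have hintP : IntegrableOn (fun y => P.eval y) (Set.Ioc (x - ρ) (x + ρ)) :=
    (Polynomial.continuous P).integrableOn_Ioc
  have hint : IntegrableOn (fun y => |u y - P.eval y|) (Set.Ioc (x - ρ) (x + ρ)) :=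
    (hintu.sub hintP).abs
  -- bound on the integral from hL1
  have hIbound : ∫ y in Set.Ioc (x - ρ) (x + ρ), |u y - P.eval y| ≤
      2 * ε * θ ^ (m + 1) * ρ ^ (m + 1) := by
    have h := hδ ρ hρ0 hρδ
    rw [intervalIntegral.integral_of_le hle] at h
    have h2ρ : (0:ℝ) < 2 * ρ := by linarith
    rw [inv_mul_le_iff₀ h2ρ] at h
    calc ∫ y in Set.Ioc (x - ρ) (x + ρ), |u y - P.eval y|
        ≤ 2 * ρ * (ε * θ ^ (m + 1) * ρ ^ m) := h
      _ = 2 * ε * θ ^ (m + 1) * ρ ^ (m + 1) := by ring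
  -- Chebyshev on the outer part
  set c : ENNReal := ENNReal.ofReal (ε * (θ * ρ) ^ m) with hcdef
  have hcrpos : 0 < ε * (θ * ρ) ^ m := by positivity
  have hc0 : c ≠ 0 := by
    simp only [hcdef, ne_eq, ENNReal.ofReal_eq_zero, not_le]
    exact hcrpos
  have hct : c ≠ ⊤ := ENNReal.ofReal_ne_top
  have hmeas : AEMeasurable (fun y => ENNReal.ofReal (|u y - P.eval y|))
      (volume.restrict (Set.Ioc (x - ρ) (x + ρ))) :=
    hint.aestronglyMeasurable.aemeasurable.ennreal_ofReal
  have hcheb := mul_meas_ge_le_lintegral₀ hmeas c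
  have hlint : ∫⁻ y in Set.Ioc (x - ρ) (x + ρ), ENNReal.ofReal (|u y - P.eval y|) =
      ENNReal.ofReal (∫ y in Set.Ioc (x - ρ) (x + ρ), |u y - P.eval y|) :=
    (ofReal_integral_eq_lintegral_ofReal hint (ae_of_all _ fun y => abs_nonneg _)).symm
  set A : Set ℝ := {y ∈ Set.Ioo (x - ρ) (x + ρ) |
      ε * |y - x| ^ m < |u y - P.eval y|} ∩ {y | θ * ρ ≤ |y - x|} with hAdef
  have hA_sub : A ⊆ {y | c ≤ ENNReal.ofReal (|u y - P.eval y|)} ∩ Set.Ioc (x - ρ) (x + ρ) := by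
    rintro y ⟨⟨hyI, hylt⟩, hyfar⟩
    refine ⟨?_, Set.Ioo_subset_Ioc_self hyI⟩
    have h1 : (θ * ρ) ^ m ≤ |y - x| ^ m :=
      pow_le_pow_left₀ (by positivity) hyfar m
    have h2 : ε * (θ * ρ) ^ m ≤ |u y - P.eval y| := by
      have : ε * (θ * ρ) ^ m ≤ ε * |y - x| ^ m := by nlinarith
      linarith
    exact ENNReal.ofReal_le_ofReal h2
  have hAle : volume A ≤ ENNReal.ofReal (2 * θ * ρ) := by
    have hA1 : volume A ≤
        (volume.restrict (Set.Ioc (x - ρ) (x + ρ)))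
          {y | c ≤ ENNReal.ofReal (|u y - P.eval y|)} := by
      rw [Measure.restrict_apply' measurableSet_Ioc]
      exact measure_mono hA_sub
    have key : c * volume A ≤ c * ENNReal.ofReal (2 * θ * ρ) := by
      calc c * volume A ≤ c * (volume.restrict (Set.Ioc (x - ρ) (x + ρ)))
            {y | c ≤ ENNReal.ofReal (|u y - P.eval y|)} := by
            exact mul_le_mul_right hA1 c
        _ ≤ ∫⁻ y in Set.Ioc (x - ρ) (x + ρ), ENNReal.ofReal (|u y - P.eval y|) := hcheb
        _ = ENNReal.ofReal (∫ y in Set.Ioc (x - ρ) (x + ρ), |u y - P.eval y|) := hlint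
        _ ≤ ENNReal.ofReal (2 * ε * θ ^ (m + 1) * ρ ^ (m + 1)) :=
            ENNReal.ofReal_le_ofReal hIbound
        _ = c * ENNReal.ofReal (2 * θ * ρ) := by
            rw [hcdef, ← ENNReal.ofReal_mul hcrpos.le]
            congr 1
            ring
    exact (ENNReal.mul_le_mul_iff_right hc0 hct).mp key
  -- cover the bad set
  have hcover : {y ∈ Set.Ioo (x - ρ) (x + ρ) | ε * |y - x| ^ m < |u y - P.eval y|} ⊆
      Set.Ioo (x - θ * ρ) (x + θ * ρ) ∪ A := by
    intro y hy
    rcases lt_or_ge (|y - x|) (θ * ρ) with h | h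
    · left
      have := abs_lt.1 h
      exact ⟨by linarith [this.1], by linarith [this.2]⟩
    · right; exact ⟨hy, h⟩
  have hEle : volume {y ∈ Set.Ioo (x - ρ) (x + ρ) | ε * |y - x| ^ m < |u y - P.eval y|} ≤
      ENNReal.ofReal (4 * θ * ρ) := by
    calc volume {y ∈ Set.Ioo (x - ρ) (x + ρ) | ε * |y - x| ^ m < |u y - P.eval y|}
        ≤ volume (Set.Ioo (x - θ * ρ) (x + θ * ρ) ∪ A) := measure_mono hcover
      _ ≤ volume (Set.Ioo (x - θ * ρ) (x + θ * ρ)) + volume A := measure_union_le _ _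
      _ ≤ ENNReal.ofReal (2 * θ * ρ) + ENNReal.ofReal (2 * θ * ρ) := by
          gcongr
          rw [Real.volume_Ioo]
          apply ENNReal.ofReal_le_ofReal; ring_nf; linarith
      _ = ENNReal.ofReal (4 * θ * ρ) := by
          rw [← ENNReal.ofReal_add (by positivity) (by positivity)]; ring_nf
  -- conclude
  calc volume {y ∈ Set.Ioo (x - ρ) (x + ρ) | ε * |y - x| ^ m < |u y - P.eval y|} /
        ENNReal.ofReal (2 * ρ)
      ≤ ENNReal.ofReal (4 * θ * ρ) / ENNReal.ofReal (2 * ρ) :=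
        ENNReal.div_le_div_right hEle _
    _ = ENNReal.ofReal (4 * θ * ρ / (2 * ρ)) :=
        (ENNReal.ofReal_div_of_pos (by linarith)).symm
    _ = ENNReal.ofReal (2 * θ) := by
        congr 1; field_simp; ring
    _ ≤ η := hθη
end

section
/- Let m ∈ ℕ, let K ⊂ ℝ be compact, and suppose u : [a,b] → ℝ with K ⊂ (a,b). Assume there exist C > 0 and ρ₀ > 0 such that for every x ∈ K there is a polynomial P_x of degree ≤ m with P_x(x) = u(x) and derivative structure D^k P_x(x) = u_k(x), satisfying ⨍_{B(x,ρ)} |u' − P_x'| ≤ C ω(ρ) ρ^{m−1} for all 0 < ρ < ρ₀, where u is absolutely continuous. Then for all x,y ∈ K with x ≤ y and |x−y| < ρ₀, and all z ∈ [x,y]: |P_y(z) − P_x(z)| ≤ 4C ω(|x−y|)|x−y|^m. -/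
open MeasureTheory Polynomial

/-- If u is absolutely continuous with derivative u', K ⊆ (a,b) is compact, and for all
x ∈ K the degree ≤ m polynomials P_x satisfy P_x(x) = u(x), D^k P_x(x) = u_k(x), and
⨍_{B(x,ρ)} |u' − P_x'| ≤ C ω(ρ) ρ^{m−1} for 0 < ρ < ρ₀, then for all x ≤ y in K with
|x−y| < ρ₀ and all z ∈ [x,y]: |P_y(z) − P_x(z)| ≤ 4C ω(|x−y|)|x−y|^m. -/
theorem polynomial_compare (a b : ℝ) (m : ℕ) (hm : 1 ≤ m) (ω : ℝ → ℝ)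
    (hcont : ContinuousOn ω (Set.Ici 0))
    (hmono : MonotoneOn ω (Set.Ici 0))
    (hconc : ConcaveOn ℝ (Set.Ici 0) ω)
    (h0 : ω 0 = 0)
    (K : Set ℝ) (hKcp : IsCompact K) (hKsub : K ⊆ Set.Ioo a b)
    (u u' : ℝ → ℝ)
    (hint : IntervalIntegrable u' volume a b)
    (hAC : ∀ y ∈ Set.Icc a b, ∀ z ∈ Set.Icc a b, u z - u y = ∫ t in y..z, u' t)
    (uk : ℕ → ℝ → ℝ)
    (P : ℝ → Polynomial ℝ)
    (C ρ₀ : ℝ) (hC : 0 < C) (hρ₀ : 0 < ρ₀)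
    (hball : ∀ x ∈ K, Set.Ioo (x - ρ₀) (x + ρ₀) ⊆ Set.Ioo a b)
    (hPdeg : ∀ x ∈ K, (P x).natDegree ≤ m)
    (hPval : ∀ x ∈ K, (P x).eval x = u x)
    (hPder : ∀ x ∈ K, ∀ k : ℕ, k ≤ m → ((derivative^[k]) (P x)).eval x = uk k x)
    (hPapprox : ∀ x ∈ K, ∀ ρ : ℝ, 0 < ρ → ρ < ρ₀ →
      (2 * ρ)⁻¹ * ∫ t in (x - ρ)..(x + ρ), |u' t - (derivative (P x)).eval t|
        ≤ C * ω ρ * ρ ^ (m - 1)) :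
    ∀ x ∈ K, ∀ y ∈ K, x ≤ y → y - x < ρ₀ → ∀ z ∈ Set.Icc x y,
      |(P y).eval z - (P x).eval z| ≤ 4 * C * ω (y - x) * (y - x) ^ m := by

  intro x hx y hy hxy hlt z hz
  rcases hxy.eq_or_lt with rfl | hxlt
  · rcases Set.mem_Icc.1 hz with ⟨h1, h2⟩
    have hzx : z = x := le_antisymm h2 h1
    subst hzx
    simp [h0, zero_pow (by omega : m ≠ 0)]
  · set ρ : ℝ := y - x with hρdef
    have hρpos : 0 < ρ := by simp [hρdef]; linarith
    have key : ∀ w ∈ K, ∀ z' : ℝ, w - ρ ≤ z' → z' ≤ w + ρ →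
        |u z' - (P w).eval z'| ≤ 2 * C * ω ρ * ρ ^ m := by
      intro w hw z' hz1 hz2
      have hsub : Set.Icc (w - ρ) (w + ρ) ⊆ Set.Icc a b := by
        intro t ht
        have : t ∈ Set.Ioo (w - ρ₀) (w + ρ₀) := by
          constructor
          · have := ht.1; simp only [Set.mem_Icc] at ht; linarith [ht.1]
          · simp only [Set.mem_Icc] at ht; linarith [ht.2]
        exact Set.Ioo_subset_Icc_self (hball w hw this)
      have hle : w - ρ ≤ w + ρ := by linarith
      have huIcc : Set.uIcc (w - ρ) (w + ρ) ⊆ Set.uIcc a b := by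
        rw [Set.uIcc_of_le hle]
        exact hsub.trans Set.Icc_subset_uIcc
      have hu'int : IntervalIntegrable u' volume (w - ρ) (w + ρ) :=
        hint.mono_set huIcc
      have hpcont : Continuous fun t => (derivative (P w)).eval t :=
        (derivative (P w)).continuous
      have hpint : IntervalIntegrable (fun t => (derivative (P w)).eval t) volume
          (w - ρ) (w + ρ) := hpcont.intervalIntegrable _ _
      have hfint : IntervalIntegrable (fun t => u' t - (derivative (P w)).eval t) volume
          (w - ρ) (w + ρ) := hu'int.sub hpint
      have huIcc2 : Set.uIcc w z' ⊆ Set.uIcc (w - ρ) (w + ρ) := by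
        rw [Set.uIcc_of_le hle]
        apply Set.uIcc_subset_Icc <;> constructor <;> first | linarith | assumption
      have hu'int2 : IntervalIntegrable u' volume w z' :=
        hu'int.mono_set huIcc2
      have hfint2 : IntervalIntegrable (fun t => u' t - (derivative (P w)).eval t) volume
          w z' := hfint.mono_set huIcc2
      have hwab : w ∈ Set.Icc a b := Set.Ioo_subset_Icc_self (hKsub hw)
      have hz'ab : z' ∈ Set.Icc a b := hsub ⟨hz1, hz2⟩
      have heq : u z' - (P w).eval z' =
          ∫ t in w..z', (u' t - (derivative (P w)).eval t) := by
        have h1 : u z' - u w = ∫ t in w..z', u' t := hAC w hwab z' hz'ab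
        have h2 : ∫ t in w..z', (derivative (P w)).eval t
            = (P w).eval z' - (P w).eval w := by
          apply intervalIntegral.integral_eq_sub_of_hasDerivAt
          · intro t _; exact (P w).hasDerivAt t
          · exact hpcont.intervalIntegrable _ _
        rw [intervalIntegral.integral_sub hu'int2 (hpcont.intervalIntegrable _ _), ← h1, h2,
          hPval w hw]
        ring
      have habs : |∫ t in w..z', (u' t - (derivative (P w)).eval t)|
          ≤ ∫ t in (w - ρ)..(w + ρ), |u' t - (derivative (P w)).eval t| := by
        have habsint : IntervalIntegrable (fun t => |u' t - (derivative (P w)).eval t|)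
            volume (w - ρ) (w + ρ) := hfint.abs
        have hnn : 0 ≤ᵐ[volume.restrict (Set.Ioc (w - ρ) (w + ρ))]
            fun t => |u' t - (derivative (P w)).eval t| :=
          Filter.Eventually.of_forall fun t => abs_nonneg _
        rcases le_total w z' with hwz | hwz
        · calc |∫ t in w..z', (u' t - (derivative (P w)).eval t)|
              ≤ ∫ t in w..z', |u' t - (derivative (P w)).eval t| := by
                simpa using intervalIntegral.abs_integral_le_integral_abs hwz
            _ ≤ ∫ t in (w - ρ)..(w + ρ), |u' t - (derivative (P w)).eval t| :=
                intervalIntegral.integral_mono_interval (by linarith) hwz hz2 hnn habsint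
        · rw [intervalIntegral.integral_symm z' w, abs_neg]
          calc |∫ t in z'..w, (u' t - (derivative (P w)).eval t)|
              ≤ ∫ t in z'..w, |u' t - (derivative (P w)).eval t| := by
                simpa using intervalIntegral.abs_integral_le_integral_abs hwz
            _ ≤ ∫ t in (w - ρ)..(w + ρ), |u' t - (derivative (P w)).eval t| :=
                intervalIntegral.integral_mono_interval hz1 hwz (by linarith) hnn habsint
      have happ := hPapprox w hw ρ hρpos hlt
      have hI : ∫ t in (w - ρ)..(w + ρ), |u' t - (derivative (P w)).eval t|
          ≤ 2 * ρ * (C * ω ρ * ρ ^ (m - 1)) := by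
        have h2ρ : (0:ℝ) < 2 * ρ := by linarith
        calc ∫ t in (w - ρ)..(w + ρ), |u' t - (derivative (P w)).eval t|
            = 2 * ρ * ((2 * ρ)⁻¹ * ∫ t in (w - ρ)..(w + ρ),
                |u' t - (derivative (P w)).eval t|) := by
              field_simp
          _ ≤ 2 * ρ * (C * ω ρ * ρ ^ (m - 1)) := by
              apply mul_le_mul_of_nonneg_left happ h2ρ.le
      have hpow : ρ ^ m = ρ * ρ ^ (m - 1) := by
        conv_lhs => rw [show m = (m - 1) + 1 by omega]
        rw [pow_succ']
      rw [heq]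
      calc |∫ t in w..z', (u' t - (derivative (P w)).eval t)|
          ≤ 2 * ρ * (C * ω ρ * ρ ^ (m - 1)) := habs.trans hI
        _ = 2 * C * ω ρ * ρ ^ m := by rw [hpow]; ring
    rcases Set.mem_Icc.1 hz with ⟨hz1, hz2⟩
    have hx' := key x hx z (by linarith) (by simp [hρdef]; linarith)
    have hy' := key y hy z (by simp [hρdef]; linarith) (by linarith)
    calc |(P y).eval z - (P x).eval z|
        = |(u z - (P x).eval z) - (u z - (P y).eval z)| := by ring_nf
      _ ≤ |u z - (P x).eval z| + |u z - (P y).eval z| := abs_sub _ _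
      _ ≤ 2 * C * ω ρ * ρ ^ m + 2 * C * ω ρ * ρ ^ m := add_le_add hx' hy'
      _ = 4 * C * ω (y - x) * (y - x) ^ m := by rw [hρdef]; ring
end
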